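/- For r ≥ 3, the probability measure ν^r on I^r = [1/(r−1), 1] ∪ {∞} with density dν^r/dy = 1/((r−2)(r−1)^{1/(r−2)} y^{(r−1)/(r−2)}) on (1/(r−1), 1) and atom ν^r({∞}) = 1/(r−1)^{1/(r−2)} satisfies the r-regular frozen percolation RDE: if Y₁,…,Y_{r−1} are i.i.d. with law ν^r, independent of U ~ Uniform[0,1], then Φ(Y₁ ∧ ⋯ ∧ Y_{r−1}; U) also has law ν^r, where Φ(x;u) = x if x > u and ∞ otherwise. -/

import Mathlib

/-!
With `b = r - 1` and `e = 1 / (r - 2)`, `ν^r` is a Pareto law of tail exponent `e` truncated to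
`[1/b, 1]`, the mass beyond `1` sitting at `∞`: its survival function is `s ↦ (b s)^(-e)` there.
Survival functions multiply under minima, so the minimum of `r - 1` independent copies is the
same kind of law with exponent `(r - 1) e = 1 + e`. Given that minimum `t`, `Φ(t; U) = t` with
probability `t ∧ 1` and `∞` otherwise, so `P(Φ ≤ a) = ∫_{t ≤ a} t dν_{1+e}(t)`; multiplying the
density of exponent `1 + e` by `y` returns the density of exponent `e` precisely because
`b e = 1 + e`.
-/

open MeasureTheory ENNReal

/-- The frozen percolation map `Φ(x;u) = x` if `x > u`, `∞` otherwise. -/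
noncomputable def frozenPhi (x : ℝ≥0∞) (u : ℝ) : ℝ≥0∞ :=
  if ENNReal.ofReal u < x then x else ⊤

/-- The measure `ν^r` on `[1/(r-1),1] ∪ {∞} ⊆ ℝ≥0∞`: density
`1/((r-2)(r-1)^{1/(r-2)} y^{(r-1)/(r-2)})` on `(1/(r-1),1)` and atom
`(r-1)^{-1/(r-2)}` at `∞`. -/
noncomputable def nuR (r : ℕ) : Measure ℝ≥0∞ :=
  Measure.map ENNReal.ofReal
      ((volume.restrict (Set.Ioo (1/((r:ℝ)-1)) 1)).withDensity
        (fun y => ENNReal.ofReal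
          (1 / (((r:ℝ)-2) * ((r:ℝ)-1) ^ ((1:ℝ)/((r:ℝ)-2)) *
            y ^ (((r:ℝ)-1)/((r:ℝ)-2)))))) +
    ENNReal.ofReal (1 / ((r:ℝ)-1) ^ ((1:ℝ)/((r:ℝ)-2))) • Measure.dirac ⊤

open Set

noncomputable def truncPareto (b e : ℝ) : Measure ℝ≥0∞ :=
  Measure.map ENNReal.ofReal
      ((volume.restrict (Ioo (1/b) 1)).withDensity
        (fun y => ENNReal.ofReal (e * b ^ (-e) * y ^ (-(1+e))))) +
    ENNReal.ofReal (b ^ (-e)) • Measure.dirac ⊤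

lemma lintegral_truncPareto_density {b e : ℝ} (hb : 1 < b) (he : 0 < e) (x : ℝ) :
    ∫⁻ y in Ioo (1/b) x, ENNReal.ofReal (e * b ^ (-e) * y ^ (-(1+e)))
      = ENNReal.ofReal (1 - (b * max (1/b) x) ^ (-e)) := by
  have hb0 : 0 < b := one_pos.trans hb
  rcases le_or_gt x (1/b) with hx | hx
  · rw [Ioo_eq_empty hx.not_gt, Measure.restrict_empty, lintegral_zero_measure,
      max_eq_left hx, mul_one_div_cancel hb0.ne', Real.one_rpow, sub_self, ofReal_zero]
  have hpos : ∀ y ∈ Icc (1/b) x, 0 < y := fun y hy => (one_div_pos.2 hb0).trans_le hy.1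
  have hint : IntegrableOn (fun y => e * b ^ (-e) * y ^ (-(1+e))) (Ioo (1/b) x) :=
    (ContinuousOn.integrableOn_Icc (continuousOn_const.mul
      (fun y hy => (Real.continuousAt_rpow_const y _ (Or.inl (hpos y hy).ne')).continuousWithinAt)))
      |>.mono_set Ioo_subset_Icc_self
  rw [← ofReal_integral_eq_lintegral_ofReal hint
    ((ae_restrict_mem measurableSet_Ioo).mono fun y hy => by
      have := hpos y (Ioo_subset_Icc_self hy); positivity),
    ← integral_Ioc_eq_integral_Ioo, ← intervalIntegral.integral_of_le hx.le,
    intervalIntegral.integral_const_mul, integral_rpow (Or.inr ⟨by linarith, fun h0 => ?_⟩),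
    max_eq_right hx.le, Real.mul_rpow hb0.le (hpos x (right_mem_Icc.2 hx.le)).le,
    one_div, Real.inv_rpow hb0.le, ← Real.rpow_neg hb0.le, show -(1+e) + 1 = -e by ring, neg_neg]
  · congr 1
    have : b ^ (-e) * b ^ e = 1 := by rw [← Real.rpow_add hb0, neg_add_cancel, Real.rpow_zero]
    field_simp
    linear_combination this
  · exact (hpos 0 (uIcc_of_le hx.le ▸ h0)).false

lemma truncPareto_Iic {b e : ℝ} (hb : 1 < b) (he : 0 < e) (s : ℝ) :
    truncPareto b e (Iic (ENNReal.ofReal s))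
      = ENNReal.ofReal (1 - (b * max (1/b) (min s 1)) ^ (-e)) := by
  have hb0 : 0 < 1/b := by positivity
  have hIic : MeasurableSet (ENNReal.ofReal ⁻¹' Iic (ENNReal.ofReal s)) :=
    measurable_ofReal measurableSet_Iic
  have hset : (ENNReal.ofReal ⁻¹' Iic (ENNReal.ofReal s) ∩ Ioo (1/b) 1 : Set ℝ)
      =ᵐ[volume] Ioo (1/b) (min s 1) := by
    have h1 : ENNReal.ofReal ⁻¹' Iic (ENNReal.ofReal s) ∩ Ioo (1/b) 1 = Iic s ∩ Ioo (1/b) 1 := by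
      ext y
      simp only [mem_inter_iff, mem_preimage, mem_Iic, mem_Ioo, ofReal_le_ofReal_iff']
      constructor
      · rintro ⟨h | h, hy⟩
        · exact ⟨h, hy⟩
        · linarith [hy.1]
      · rintro ⟨h, hy⟩; exact ⟨Or.inl h, hy⟩
    have h2 : Ioo (1/b) (min s 1) = Iio s ∩ Ioo (1/b) 1 := by
      ext y; simp only [mem_Ioo, lt_min_iff, mem_inter_iff, mem_Iio]; tauto
    rw [h1, h2]
    exact Iio_ae_eq_Iic.symm.inter ae_eq_rfl
  rw [truncPareto, Measure.add_apply, Measure.smul_apply, Measure.dirac_apply' _ measurableSet_Iic,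
    indicator_of_notMem (by simp), smul_zero, add_zero,
    Measure.map_apply measurable_ofReal measurableSet_Iic, withDensity_apply _ hIic,
    Measure.restrict_restrict hIic, Measure.restrict_congr_set hset,
    lintegral_truncPareto_density hb he]

lemma truncPareto_univ {b e : ℝ} (hb : 1 < b) (he : 0 < e) : truncPareto b e univ = 1 := by
  have hb0 : 0 < b := one_pos.trans hb
  have hb1 : 1/b < 1 := (div_lt_one hb0).2 hb
  rw [truncPareto, Measure.add_apply, Measure.smul_apply, measure_univ (μ := Measure.dirac ⊤),
    smul_eq_mul, mul_one,
    Measure.map_apply measurable_ofReal MeasurableSet.univ, preimage_univ,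
    withDensity_apply _ MeasurableSet.univ, Measure.restrict_univ,
    lintegral_truncPareto_density hb he, max_eq_right hb1.le, mul_one,
    ← ofReal_add (sub_nonneg.2 (Real.rpow_le_one_of_one_le_of_nonpos hb.le (by linarith)))
      (Real.rpow_nonneg hb0.le _), sub_add_cancel, ofReal_one]

lemma isProbabilityMeasure_truncPareto {b e : ℝ} (hb : 1 < b) (he : 0 < e) :
    IsProbabilityMeasure (truncPareto b e) :=
  ⟨truncPareto_univ hb he⟩

lemma one_le_mul_max_one_div {b : ℝ} (hb : 0 < b) (s : ℝ) : 1 ≤ b * max (1/b) (min s 1) := by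
  calc 1 = b * (1/b) := (mul_one_div_cancel hb.ne').symm
    _ ≤ b * max (1/b) (min s 1) := mul_le_mul_of_nonneg_left (le_max_left _ _) hb.le

lemma truncPareto_Ioi {b e : ℝ} (hb : 1 < b) (he : 0 < e) (s : ℝ) :
    truncPareto b e (Ioi (ENNReal.ofReal s))
      = ENNReal.ofReal ((b * max (1/b) (min s 1)) ^ (-e)) := by
  have := isProbabilityMeasure_truncPareto hb he
  have h1 := one_le_mul_max_one_div (one_pos.trans hb) s
  rw [← compl_Iic, prob_compl_eq_one_sub measurableSet_Iic, truncPareto_Iic hb he, ← ofReal_one,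
    ← ofReal_sub _ (sub_nonneg.2 (Real.rpow_le_one_of_one_le_of_nonpos h1 (by linarith))),
    sub_sub_cancel (1:ℝ)]

lemma map_iInf_pi_truncPareto {n : ℕ} (hn : n ≠ 0) {b e : ℝ} (hb : 1 < b) (he : 0 < e) :
    (Measure.pi fun _ : Fin n => truncPareto b e).map (fun y => ⨅ i, y i)
      = truncPareto b (n * e) := by
  have hne : 0 < (n:ℝ) * e := mul_pos (Nat.cast_pos.2 (Nat.pos_of_ne_zero hn)) he
  have := isProbabilityMeasure_truncPareto hb he
  have := isProbabilityMeasure_truncPareto hb hne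
  have hmeas : Measurable fun y : Fin n → ℝ≥0∞ => ⨅ i, y i :=
    Measurable.iInf fun i => measurable_pi_apply i
  have := Measure.isProbabilityMeasure_map (μ := Measure.pi fun _ : Fin n => truncPareto b e)
    hmeas.aemeasurable
  refine Measure.ext_of_Iic _ _ fun a => ?_
  rcases eq_or_ne a ⊤ with rfl | ha
  · simp only [Iic_top, measure_univ]
  obtain ⟨s, rfl⟩ : ∃ s, a = ENNReal.ofReal s := ⟨a.toReal, (ofReal_toReal ha).symm⟩
  have hpre : (fun y : Fin n → ℝ≥0∞ => ⨅ i, y i) ⁻¹' Iic (ENNReal.ofReal s)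
      = (univ.pi fun _ => Ioi (ENNReal.ofReal s))ᶜ := by
    ext y
    simp [← not_lt, ← Finset.inf_univ_eq_iInf, Finset.lt_inf_iff ofReal_lt_top]
  have hc : 0 ≤ b * max (1/b) (min s 1) :=
    zero_le_one.trans (one_le_mul_max_one_div (one_pos.trans hb) s)
  rw [Measure.map_apply hmeas measurableSet_Iic, hpre,
    prob_compl_eq_one_sub (MeasurableSet.univ_pi fun _ => measurableSet_Ioi), Measure.pi_pi,
    Finset.prod_const, Finset.card_univ, Fintype.card_fin, truncPareto_Ioi hb he,
    truncPareto_Iic hb hne, ← ofReal_pow (Real.rpow_nonneg hc _), ← Real.rpow_natCast,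
    ← Real.rpow_mul hc, ← ofReal_one, ← ofReal_sub _ (Real.rpow_nonneg hc _), neg_mul, mul_comm e]

lemma truncPareto_density_mul_self {b e y : ℝ} (hb : 0 < b) (hy : 0 < y) (hbe : b * e = 1 + e) :
    (1+e) * b ^ (-(1+e)) * y ^ (-(1+(1+e))) * y = e * b ^ (-e) * y ^ (-(1+e)) := by
  have hb' : b ^ (-(1+e)) = b ^ (-e) * b⁻¹ := by
    rw [← Real.rpow_neg_one b, ← Real.rpow_add hb, neg_add, add_comm]
  have hy' : y ^ (-(1+(1+e))) * y = y ^ (-(1+e)) := by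
    rw [← Real.rpow_add_one hy.ne']; ring_nf
  have hcoef : (1+e) * b⁻¹ = e := by rw [← hbe, mul_comm b, mul_inv_cancel_right₀ hb.ne']
  calc (1+e) * b ^ (-(1+e)) * y ^ (-(1+(1+e))) * y
      = ((1+e) * b⁻¹) * b ^ (-e) * (y ^ (-(1+(1+e))) * y) := by rw [hb']; ring
    _ = e * b ^ (-e) * y ^ (-(1+e)) := by rw [hcoef, hy']

lemma lintegral_indicator_min_one_truncPareto {b e : ℝ} (hb : 1 < b) (hbe : b * e = 1 + e)
    {a : ℝ≥0∞} (ha : a ≠ ⊤) :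
    ∫⁻ t, (Iic a).indicator (fun t => t ⊓ 1) t ∂truncPareto b (1 + e)
      = truncPareto b e (Iic a) := by
  have hb0 : 0 < b := one_pos.trans hb
  have he : 0 < e := by nlinarith
  have htop : (⊤ : ℝ≥0∞) ∉ Iic a := by simpa using ha
  have hIic : MeasurableSet (ENNReal.ofReal ⁻¹' Iic a) := measurable_ofReal measurableSet_Iic
  have hg : Measurable ((Iic a).indicator fun t : ℝ≥0∞ => t ⊓ 1) :=
    (measurable_id.min measurable_const).indicator measurableSet_Iic
  rw [truncPareto, lintegral_add_measure, lintegral_smul_measure, lintegral_dirac' _ hg,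
    indicator_of_notMem htop, smul_zero, add_zero, lintegral_map hg measurable_ofReal,
    lintegral_withDensity_eq_lintegral_mul _ (by fun_prop)
      (g := fun y => (Iic a).indicator (fun t => t ⊓ 1) (ENNReal.ofReal y))
      (hg.comp measurable_ofReal),
    truncPareto, Measure.add_apply, Measure.smul_apply, Measure.dirac_apply' _ measurableSet_Iic,
    indicator_of_notMem htop, smul_zero, add_zero,
    Measure.map_apply measurable_ofReal measurableSet_Iic, withDensity_apply _ hIic,
    ← lintegral_indicator hIic]
  refine setLIntegral_congr_fun measurableSet_Ioo fun y hy => ?_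
  have hy0 : 0 < y := (one_div_pos.2 hb0).trans hy.1
  by_cases hya : ENNReal.ofReal y ∈ Iic a
  · rw [Pi.mul_apply, indicator_of_mem hya,
      indicator_of_mem (mem_preimage.2 hya), inf_eq_left.2 (ofReal_le_one.2 hy.2.le),
      ← ofReal_mul (by positivity), truncPareto_density_mul_self hb0 hy0 hbe]
  · rw [Pi.mul_apply, indicator_of_notMem hya,
      indicator_of_notMem (fun h => hya (mem_preimage.1 h)), mul_zero]

lemma measurable_frozenPhi : Measurable fun p : ℝ≥0∞ × ℝ => frozenPhi p.1 p.2 :=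
  Measurable.ite (measurableSet_lt (measurable_ofReal.comp measurable_snd) measurable_fst)
    measurable_fst measurable_const

lemma restrict_Icc_volume_ofReal_lt (m : ℝ≥0∞) :
    volume.restrict (Icc (0:ℝ) 1) {u | ENNReal.ofReal u < m} = m ⊓ 1 := by
  rcases eq_or_ne m ⊤ with rfl | hm
  · simp
  have hset : {u | ENNReal.ofReal u < m} ∩ Icc 0 1 = Icc 0 (min 1 m.toReal) \ {m.toReal} := by
    ext u
    simp only [mem_inter_iff, mem_sdiff, mem_singleton_iff, mem_Icc, le_min_iff]
    constructor
    · rintro ⟨h, hu⟩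
      have := (ofReal_lt_iff_lt_toReal hu.1 hm).1 h
      exact ⟨⟨hu.1, hu.2, this.le⟩, this.ne⟩
    · rintro ⟨⟨h0, h1, h⟩, hne⟩
      exact ⟨(ofReal_lt_iff_lt_toReal h0 hm).2 (lt_of_le_of_ne h hne), h0, h1⟩
  rw [Measure.restrict_apply' measurableSet_Icc, hset, measure_sdiff_null (measure_singleton _),
    Real.volume_Icc, sub_zero, ofReal_min, ofReal_one, ofReal_toReal hm, min_comm]

lemma map_frozenPhi_prod_Iic (μ : Measure ℝ≥0∞) {a : ℝ≥0∞} (ha : a ≠ ⊤) :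
    (μ.prod (volume.restrict (Icc (0:ℝ) 1))).map (fun p => frozenPhi p.1 p.2) (Iic a)
      = ∫⁻ t, (Iic a).indicator (fun t => t ⊓ 1) t ∂μ := by
  have hpre : (fun p : ℝ≥0∞ × ℝ => frozenPhi p.1 p.2) ⁻¹' Iic a
      = {p | p.1 ≤ a ∧ ENNReal.ofReal p.2 < p.1} := by
    ext ⟨t, u⟩
    simp only [mem_preimage, mem_Iic, mem_ofPred_eq, frozenPhi]
    split_ifs with h
    · simp [h]
    · simp [h, ha]
  have hS : MeasurableSet {p : ℝ≥0∞ × ℝ | p.1 ≤ a ∧ ENNReal.ofReal p.2 < p.1} :=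
    (measurable_fst measurableSet_Iic).inter
      (measurableSet_lt (measurable_ofReal.comp measurable_snd) measurable_fst)
  rw [Measure.map_apply measurable_frozenPhi measurableSet_Iic, hpre, Measure.prod_apply hS]
  refine lintegral_congr fun t => ?_
  by_cases ht : t ∈ Iic a
  · rw [indicator_of_mem ht, ← restrict_Icc_volume_ofReal_lt]
    congr 1
    ext u
    simp [mem_Iic.1 ht]
  · rw [indicator_of_notMem ht]
    simp [mem_Iic.not.1 ht]

lemma map_frozenPhi_truncPareto {b e : ℝ} (hb : 1 < b) (hbe : b * e = 1 + e) :
    ((truncPareto b (1 + e)).prod (volume.restrict (Icc (0:ℝ) 1))).map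
      (fun p => frozenPhi p.1 p.2) = truncPareto b e := by
  have he : 0 < e := by nlinarith
  have := isProbabilityMeasure_truncPareto hb (by linarith : 0 < 1 + e)
  have : IsProbabilityMeasure (volume.restrict (Icc (0:ℝ) 1)) :=
    ⟨by rw [Measure.restrict_apply_univ, Real.volume_Icc, sub_zero, ofReal_one]⟩
  have := isProbabilityMeasure_truncPareto hb he
  have := Measure.isProbabilityMeasure_map (μ := (truncPareto b (1 + e)).prod
    (volume.restrict (Icc (0:ℝ) 1))) measurable_frozenPhi.aemeasurable
  refine Measure.ext_of_Iic _ _ fun a => ?_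
  rcases eq_or_ne a ⊤ with rfl | ha
  · rw [Iic_top, measure_univ, measure_univ]
  rw [map_frozenPhi_prod_Iic _ ha, lintegral_indicator_min_one_truncPareto hb hbe ha]

lemma nuR_eq_truncPareto {r : ℕ} (hr : 3 ≤ r) :
    nuR r = truncPareto ((r:ℝ) - 1) (1 / ((r:ℝ) - 2)) := by
  have hR : (3:ℝ) ≤ r := by exact_mod_cast hr
  have h1 : (0:ℝ) < r - 1 := by linarith
  have h2 : (0:ℝ) < r - 2 := by linarith
  rw [nuR, truncPareto, Real.rpow_neg h1.le, ← one_div]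
  congr 2
  refine withDensity_congr_ae ((ae_restrict_mem measurableSet_Ioo).mono fun y hy => ?_)
  have hy : 0 < y := (one_div_pos.2 h1).trans hy.1
  dsimp only
  rw [show ((r:ℝ) - 1) / (r - 2) = 1 + 1 / (r - 2) by field_simp; ring, Real.rpow_neg hy.le]
  field_simp

/-- For `r ≥ 3`, the measure `ν^r` solves the `r`-regular frozen percolation RDE:
if `Y₁, …, Y_{r-1}` are i.i.d. `ν^r` independent of `U ~ Uniform[0,1]`, then
`Φ(Y₁ ∧ ⋯ ∧ Y_{r-1}; U)` has law `ν^r`. -/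
theorem stmt_16 (r : ℕ) (hr : 3 ≤ r) :
    Measure.map (fun p : (Fin (r-1) → ℝ≥0∞) × ℝ => frozenPhi (⨅ i, p.1 i) p.2)
        ((Measure.pi fun _ : Fin (r-1) => nuR r).prod
          (volume.restrict (Set.Icc (0:ℝ) 1))) = nuR r := by
  have hR : (3:ℝ) ≤ r := by exact_mod_cast hr
  have hb : 1 < (r:ℝ) - 1 := by linarith
  have he : 0 < 1 / ((r:ℝ) - 2) := one_div_pos.2 (by linarith)
  have hbe : ((r:ℝ) - 1) * (1 / ((r:ℝ) - 2)) = 1 + 1 / ((r:ℝ) - 2) := by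
    field_simp [show (r:ℝ) - 2 ≠ 0 by linarith]; ring
  have hn : ((r - 1 : ℕ) : ℝ) = (r:ℝ) - 1 := by rw [Nat.cast_sub (by omega), Nat.cast_one]
  have := isProbabilityMeasure_truncPareto hb he
  have hmin : Measurable fun y : Fin (r-1) → ℝ≥0∞ => ⨅ i, y i :=
    Measurable.iInf fun i => measurable_pi_apply i
  have hsplit : (fun p : (Fin (r-1) → ℝ≥0∞) × ℝ => frozenPhi (⨅ i, p.1 i) p.2)
      = (fun q : ℝ≥0∞ × ℝ => frozenPhi q.1 q.2) ∘ Prod.map (fun y => ⨅ i, y i) id := rfl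
  rw [nuR_eq_truncPareto hr, hsplit,
    ← Measure.map_map measurable_frozenPhi (hmin.prodMap measurable_id),
    ← Measure.map_prod_map _ _ hmin measurable_id, Measure.map_id,
    map_iInf_pi_truncPareto (by omega) hb he, hn, hbe]
  exact map_frozenPhi_truncPareto hb hbe
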